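/- Let (B_ℓ)_{ℓ≥0} be a sequence of rational numbers with ord(B_ℓ) = −p_ℓ for every ℓ ≥ 0, and let (C_ℓ)_{ℓ≥0} satisfy the recurrence C_0 = −B_0 and C_ℓ = −Σ_{k=0}^{ℓ−1} C_k·M_{ℓ−k} − (M_{ℓ+1} − P_ℓ) for ℓ ≥ 1. Let ℓ > 1 be even, and assume that ord(C_k) = −p_k for every odd k with 1 ≤ k ≤ ℓ−1 and that ord(C_k) > −p_k for every even k with 2 ≤ k ≤ ℓ−1. Then ord(C_ℓ) > −p_ℓ (i.e., C_ℓ is either zero or C_ℓ = K_ℓ/2^{q_ℓ} with K_ℓ odd and q_ℓ < p_ℓ). -/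

import Mathlib

open scoped BigOperators

/-- 2-adic valuation of a rational, with `ord 0 = ⊤`. -/
noncomputable def ord (q : ℚ) : WithTop ℤ :=
  if q = 0 then ⊤ else (padicValRat 2 q : WithTop ℤ)

/-- `p ℓ = ℓ + 1 + ord((ℓ+1)!)`. -/
def p (ℓ : ℕ) : ℕ := ℓ + 1 + padicValNat 2 (Nat.factorial (ℓ + 1))

/-- `M_k = Σ_{j=1}^k binom(k,j) Σ_{(i_1,…,i_j): Σ_t (i_t+1)=k} B_{i_1}⋯B_{i_j}`.
(A tuple `(i_1,…,i_j)` of nonnegative integers satisfies `Σ_t (i_t+1) = k` iff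
`Σ_t i_t = k - j`; here `j ≤ k` so natural subtraction is exact.) -/
noncomputable def M (B : ℕ → ℚ) (k : ℕ) : ℚ :=
  ∑ j ∈ Finset.Icc 1 k, (k.choose j : ℚ) *
    ∑ v ∈ Finset.Nat.antidiagonalTuple j (k - j), ∏ t, B (v t)

/-- `P_k = Σ_{j=1}^k binom(k,j) Σ_{(i_1,…,i_j): Σ_t (i_t+1)=k+1} B_{i_1}⋯B_{i_j}`. -/
noncomputable def P (B : ℕ → ℚ) (k : ℕ) : ℚ :=
  ∑ j ∈ Finset.Icc 1 k, (k.choose j : ℚ) *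
    ∑ v ∈ Finset.Nat.antidiagonalTuple j (k + 1 - j), ∏ t, B (v t)


lemma ord_zero : ord 0 = ⊤ := if_pos rfl

lemma ord_eq_of_ne {q : ℚ} (h : q ≠ 0) : ord q = (padicValRat 2 q : WithTop ℤ) := if_neg h

lemma ord_ne_top {q : ℚ} (h : q ≠ 0) : ord q ≠ ⊤ := by
  rw [ord_eq_of_ne h]; exact WithTop.coe_ne_top

lemma ord_mul (x y : ℚ) : ord (x * y) = ord x + ord y := by
  rcases eq_or_ne x 0 with rfl | hx
  · simp [ord_zero]
  rcases eq_or_ne y 0 with rfl | hy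
  · simp [ord_zero]
  rw [ord_eq_of_ne hx, ord_eq_of_ne hy, ord_eq_of_ne (mul_ne_zero hx hy),
    padicValRat.mul hx hy, WithTop.coe_add]

lemma ord_neg (x : ℚ) : ord (-x) = ord x := by
  rcases eq_or_ne x 0 with rfl | hx
  · simp
  rw [ord_eq_of_ne hx, ord_eq_of_ne (neg_ne_zero.mpr hx), padicValRat.neg]

lemma min_le_ord_add (x y : ℚ) : min (ord x) (ord y) ≤ ord (x + y) := by
  rcases eq_or_ne x 0 with rfl | hx
  · simp [ord_zero]
  rcases eq_or_ne y 0 with rfl | hy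
  · simp [ord_zero]
  rcases eq_or_ne (x + y) 0 with h | h
  · simp [h, ord_zero]
  rw [ord_eq_of_ne hx, ord_eq_of_ne hy, ord_eq_of_ne h]
  rw [← WithTop.coe_min, WithTop.coe_le_coe]
  exact padicValRat.min_le_padicValRat_add h

lemma ord_add_ge {x y : ℚ} {c : WithTop ℤ} (hx : c ≤ ord x) (hy : c ≤ ord y) :
    c ≤ ord (x + y) :=
  le_trans (le_min hx hy) (min_le_ord_add x y)

lemma ord_sum {ι : Type*} {s : Finset ι} {f : ι → ℚ} {c : WithTop ℤ}
    (h : ∀ i ∈ s, c ≤ ord (f i)) : c ≤ ord (∑ i ∈ s, f i) := by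
  classical
  induction s using Finset.cons_induction with
  | empty => simp [ord_zero]
  | cons a s ha ih =>
    rw [Finset.sum_cons]
    exact ord_add_ge (h a (Finset.mem_cons_self a s))
      (ih fun i hi => h i (Finset.mem_cons_of_mem hi))

lemma ord_prod_ge {ι : Type*} {s : Finset ι} {f : ι → ℚ} {c : ι → ℤ}
    (h : ∀ i ∈ s, ((c i : ℤ) : WithTop ℤ) ≤ ord (f i)) :
    ((∑ i ∈ s, c i : ℤ) : WithTop ℤ) ≤ ord (∏ i ∈ s, f i) := by
  classical
  induction s using Finset.cons_induction with
  | empty => simp [ord_eq_of_ne one_ne_zero, padicValRat.one]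
  | cons a s ha ih =>
    rw [Finset.prod_cons, Finset.sum_cons, ord_mul, WithTop.coe_add]
    exact add_le_add (h a (Finset.mem_cons_self a s))
      (ih fun i hi => h i (Finset.mem_cons_of_mem hi))

lemma ord_natCast_nonneg (n : ℕ) : (0 : WithTop ℤ) ≤ ord (n : ℚ) := by
  rcases eq_or_ne n 0 with rfl | hn
  · simp [ord_zero]
  rw [show ((n : ℚ)) = ((n : ℤ) : ℚ) by push_cast; ring,
    ord_eq_of_ne (by exact_mod_cast hn), padicValRat.of_int]
  rw [show ((0 : WithTop ℤ)) = ((0 : ℤ) : WithTop ℤ) by rfl, WithTop.coe_le_coe]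
  positivity

lemma ord_natCast_eq (n : ℕ) (hn : n ≠ 0) :
    ord (n : ℚ) = ((padicValNat 2 n : ℤ) : WithTop ℤ) := by
  rw [ord_eq_of_ne (by exact_mod_cast hn), padicValRat.of_nat]

lemma ord_odd {n : ℕ} (h : Odd n) : ord (n : ℚ) = (0 : ℤ) := by
  have hn : n ≠ 0 := by rintro rfl; simp at h
  rw [ord_natCast_eq n hn, padicValNat.eq_zero_of_not_dvd (by
    rw [Nat.two_dvd_ne_zero]; exact Nat.odd_iff.mp h)]
  rfl

lemma ord_even {n : ℕ} (h : 2 ∣ n) : ((1 : ℤ) : WithTop ℤ) ≤ ord (n : ℚ) := by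
  rcases eq_or_ne n 0 with rfl | hn
  · simp [ord_zero]
  rw [ord_natCast_eq n hn, WithTop.coe_le_coe]
  have := (padicValNat_dvd_iff (p := 2) 1 n).mp (by simpa using h)
  omega

lemma ord_two_pow (n : ℕ) : ord ((2 : ℚ) ^ n) = ((n : ℤ) : WithTop ℤ) := by
  have h2 : ((2:ℚ)^n) ≠ 0 := by positivity
  rw [ord_eq_of_ne h2, padicValRat.pow _,
    show ((2:ℚ)) = ((2:ℕ):ℚ) by norm_num, padicValRat.of_nat, padicValNat.self (by norm_num)]
  simp

lemma ord_one : ord (1 : ℚ) = ((0:ℤ) : WithTop ℤ) := by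
  rw [ord_eq_of_ne one_ne_zero, padicValRat.one]


private lemma two_dvd_of_val {n : ℕ} (h : 1 ≤ padicValNat 2 n) : 2 ∣ n :=
  dvd_trans (by calc (2:ℕ) = 2^1 := (pow_one 2).symm
                _ ∣ 2 ^ padicValNat 2 n := pow_dvd_pow 2 h) pow_padicValNat_dvd

private lemma val_of_two_dvd {n : ℕ} (hn : n ≠ 0) (h : 2 ∣ n) : 1 ≤ padicValNat 2 n := by
  have := (padicValNat_dvd_iff (p := 2) 1 n).mp (by simpa using h)
  omega

lemma num_den_odd_of_ord_zero {x : ℚ} (hx : x ≠ 0) (h : ord x = ((0:ℤ) : WithTop ℤ)) :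
    ¬ (2:ℤ) ∣ x.num ∧ ¬ 2 ∣ x.den := by
  rw [ord_eq_of_ne hx, WithTop.coe_eq_coe] at h
  have hdef : padicValRat 2 x = padicValInt 2 x.num - padicValNat 2 x.den := rfl
  have hcop := x.reduced
  have hnum0 : x.num.natAbs ≠ 0 := Int.natAbs_ne_zero.mpr (Rat.num_ne_zero.mpr hx)
  have hden0 : x.den ≠ 0 := x.den_nz
  have key : ¬ (2 ∣ x.num.natAbs ∧ 2 ∣ x.den) := by
    rintro ⟨h1, h2⟩
    have : (2:ℕ) ∣ 1 := hcop ▸ Nat.dvd_gcd h1 h2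
    norm_num at this
  constructor
  · intro hd
    have h1 : 1 ≤ padicValInt 2 x.num :=
      val_of_two_dvd hnum0 (Int.natAbs_dvd_natAbs.mpr hd)
    have h2 : 1 ≤ padicValNat 2 x.den := by omega
    exact key ⟨Int.natAbs_dvd_natAbs.mpr hd, two_dvd_of_val h2⟩
  · intro hd
    have h2 : 1 ≤ padicValNat 2 x.den := val_of_two_dvd hden0 hd
    have h1 : 1 ≤ padicValInt 2 x.num := by omega
    exact key ⟨two_dvd_of_val h1, hd⟩

lemma ord_unit_add {x y : ℚ} (hx : ord x = ((0:ℤ) : WithTop ℤ))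
    (hy : ord y = ((0:ℤ) : WithTop ℤ)) : ((1:ℤ) : WithTop ℤ) ≤ ord (x + y) := by
  have hx0 : x ≠ 0 := by rintro rfl; rw [ord_zero] at hx; exact absurd hx (by simp)
  have hy0 : y ≠ 0 := by rintro rfl; rw [ord_zero] at hy; exact absurd hy (by simp)
  rcases eq_or_ne (x + y) 0 with h0 | h0
  · rw [h0, ord_zero]; exact le_top
  obtain ⟨hxn, hxd⟩ := num_den_odd_of_ord_zero hx0 hx
  obtain ⟨hyn, hyd⟩ := num_den_odd_of_ord_zero hy0 hy
  set N : ℤ := x.num * (y.den : ℤ) + y.num * (x.den : ℤ) with hN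
  set D : ℤ := (x.den : ℤ) * (y.den : ℤ) with hD
  have hDne : D ≠ 0 := by positivity
  have hxy : x + y = (N : ℚ) / (D : ℚ) := by
    rw [hN, hD]
    have e1 : (x * (x.den:ℚ)) = (x.num:ℚ) := by exact_mod_cast Rat.mul_den_eq_num x
    have e2 : (y * (y.den:ℚ)) = (y.num:ℚ) := by exact_mod_cast Rat.mul_den_eq_num y
    field_simp
    push_cast
    linear_combination ((y.den:ℚ)) * e1 + ((x.den:ℚ)) * e2
  have hNne : N ≠ 0 := by
    intro hc
    rw [hc] at hxy
    simp at hxy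
    exact h0 hxy
  rw [ord_eq_of_ne h0, hxy, WithTop.coe_le_coe,
    padicValRat.div (by exact_mod_cast hNne) (by exact_mod_cast hDne)]
  have hvN : 1 ≤ padicValInt 2 N := by
    apply val_of_two_dvd (Int.natAbs_ne_zero.mpr hNne)
    have : Odd (x.num * (y.den:ℤ)) := (Int.odd_mul).mpr
      ⟨Int.not_even_iff_odd.mp (fun hc => hxn hc.two_dvd),
       Int.not_even_iff_odd.mp (fun hc => hyd (by exact_mod_cast hc.two_dvd))⟩
    have h2 : Odd (y.num * (x.den:ℤ)) := (Int.odd_mul).mpr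
      ⟨Int.not_even_iff_odd.mp (fun hc => hyn hc.two_dvd),
       Int.not_even_iff_odd.mp (fun hc => hxd (by exact_mod_cast hc.two_dvd))⟩
    have h3 := this.add_odd h2
    rw [hN]
    simpa using Int.natAbs_dvd_natAbs.mpr h3.two_dvd
  have hvD : padicValInt 2 D = 0 := by
    apply padicValInt.eq_zero_of_not_dvd
    rw [hD]
    intro hc
    have hc' : 2 ∣ x.den * y.den := by exact_mod_cast hc
    rcases (Nat.Prime.dvd_mul Nat.prime_two).mp hc' with hc1 | hc1
    · exact hxd hc1
    · exact hyd hc1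
  rw [show padicValRat 2 ((N:ℚ)) = padicValInt 2 N from by rw [padicValRat.of_int],
      show padicValRat 2 ((D:ℚ)) = padicValInt 2 D from by rw [padicValRat.of_int]]
  omega


lemma p_pred {m : ℕ} (h : 1 ≤ m) : p (m - 1) = m + padicValNat 2 (Nat.factorial m) := by
  obtain ⟨m', rfl⟩ : ∃ m', m = m' + 1 := ⟨m - 1, by omega⟩
  rfl

lemma padicValNat_prod {ι : Type*} (s : Finset ι) (f : ι → ℕ) (hf : ∀ i ∈ s, f i ≠ 0) :
    padicValNat 2 (∏ i ∈ s, f i) = ∑ i ∈ s, padicValNat 2 (f i) := by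
  classical
  induction s using Finset.cons_induction with
  | empty => simp
  | cons a s ha ih =>
    rw [Finset.prod_cons, Finset.sum_cons,
      padicValNat.mul (hf a (Finset.mem_cons_self a s))
        (Finset.prod_ne_zero_iff.mpr fun i hi => hf i (Finset.mem_cons_of_mem hi)),
      ih fun i hi => hf i (Finset.mem_cons_of_mem hi)]

lemma padicValNat_le_of_dvd {a b : ℕ} (h : a ∣ b) (hb : b ≠ 0) :
    padicValNat 2 a ≤ padicValNat 2 b := by
  have h1 : (2:ℕ) ^ padicValNat 2 a ∣ b := dvd_trans pow_padicValNat_dvd h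
  have := (padicValNat_dvd_iff (p := 2) (padicValNat 2 a) b).mp h1
  omega

lemma sum_p_le {j n : ℕ} (hj : 1 ≤ j) (v : Fin j → ℕ) (hv : ∑ t, v t = n) :
    ∑ t, p (v t) ≤ p (n + j - 1) := by
  have hone : ∑ _t : Fin j, 1 = j := by simp
  have hsum1 : ∑ t : Fin j, (v t + 1) = n + j := by
    rw [Finset.sum_add_distrib, hv, hone]
  have h1 : ∑ t, p (v t) = (n + j) + ∑ t, padicValNat 2 (Nat.factorial (v t + 1)) := by
    unfold p
    rw [Finset.sum_add_distrib]
    congr 1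
  have hdvd : (∏ t, Nat.factorial (v t + 1)) ∣ Nat.factorial (n + j) := by
    have := Nat.prod_factorial_dvd_factorial_sum Finset.univ (fun t : Fin j => v t + 1)
    rwa [hsum1] at this
  have h2 : ∑ t, padicValNat 2 (Nat.factorial (v t + 1)) ≤ padicValNat 2 (Nat.factorial (n+j)) := by
    rw [← padicValNat_prod _ _ (fun i _ => Nat.factorial_ne_zero _)]
    exact padicValNat_le_of_dvd hdvd (Nat.factorial_ne_zero _)
  rw [h1, p_pred (by omega : 1 ≤ n + j)]
  omega

lemma two_dvd_central (a : ℕ) (ha : 1 ≤ a) : 2 ∣ (a + a).choose a := by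
  obtain ⟨b, rfl⟩ : ∃ b, a = b + 1 := ⟨a - 1, by omega⟩
  have h1 : (b + 1 + (b + 1)) = (2*b+1) + 1 := by ring
  have h2 : ((2*b+1) + 1).choose (b+1) = (2*b+1).choose b + (2*b+1).choose (b+1) :=
    Nat.choose_succ_succ (2*b+1) b
  have h3 : (2*b+1).choose b = (2*b+1).choose (b+1) := by
    have := Nat.choose_symm (by omega : b + 1 ≤ 2*b+1)
    rwa [show 2*b+1 - (b+1) = b by omega] at this
  rw [h1, h2]
  omega

lemma sum_p_succ_le {j n : ℕ} (hj : 2 ≤ j) (v : Fin j → ℕ)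
    (hv : ∑ t, v t = n) (hd : v ⟨0, by omega⟩ = v ⟨1, by omega⟩) :
    (∑ t, p (v t)) + 1 ≤ p (n + j - 1) := by
  classical
  set i0 : Fin j := ⟨0, by omega⟩
  set i1 : Fin j := ⟨1, by omega⟩
  have hne : i1 ≠ i0 := by simp [i0, i1, Fin.ext_iff]
  set s : Finset (Fin j) := (Finset.univ.erase i0).erase i1 with hs
  set a : ℕ := v i0 + 1 with hadef
  set r : ℕ := ∑ t ∈ s, (v t + 1) with hr
  have hsplit : ∀ g : Fin j → ℕ, ∑ t, g t = g i0 + g i1 + ∑ t ∈ s, g t := by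
    intro g
    rw [← Finset.add_sum_erase _ g (Finset.mem_univ i0),
      ← Finset.add_sum_erase _ g (Finset.mem_erase.mpr ⟨hne, Finset.mem_univ i1⟩)]
    ring
  have hsum : n + j = a + a + r := by
    have := hsplit (fun t => v t + 1)
    have h2 : ∑ t, (v t + 1) = n + j := by
      rw [Finset.sum_add_distrib, hv]; simp [Finset.card_univ]
    rw [h2, ← hd] at this
    omega
  have hprodsplit : (∏ t, Nat.factorial (v t + 1)) =
      Nat.factorial a * Nat.factorial a * ∏ t ∈ s, Nat.factorial (v t + 1) := by
    rw [← Finset.mul_prod_erase _ _ (Finset.mem_univ i0),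
      ← Finset.mul_prod_erase _ _ (Finset.mem_erase.mpr ⟨hne, Finset.mem_univ i1⟩), ← hd]
    ring
  have hdvd : 2 * ∏ t, Nat.factorial (v t + 1) ∣ Nat.factorial (n + j) := by
    rw [hprodsplit, hsum]
    have hc : 2 * (Nat.factorial a * Nat.factorial a) ∣ Nat.factorial (a + a) := by
      rcases two_dvd_central a (by omega) with ⟨c, hc⟩
      rw [← Nat.add_choose_mul_factorial_mul_factorial a a, hc]
      exact ⟨c, by ring⟩
    have hprod : (∏ t ∈ s, Nat.factorial (v t + 1)) ∣ Nat.factorial r :=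
      Nat.prod_factorial_dvd_factorial_sum s _
    calc 2 * (Nat.factorial a * Nat.factorial a * ∏ t ∈ s, Nat.factorial (v t + 1))
        = (2 * (Nat.factorial a * Nat.factorial a)) * ∏ t ∈ s, Nat.factorial (v t + 1) := by ring
      _ ∣ Nat.factorial (a + a) * Nat.factorial r := mul_dvd_mul hc hprod
      _ ∣ Nat.factorial (a + a + r) := Nat.factorial_mul_factorial_dvd_factorial_add _ _
  have hval : 1 + ∑ t, padicValNat 2 (Nat.factorial (v t + 1)) ≤
      padicValNat 2 (Nat.factorial (n + j)) := by
    have hne0 : (∏ t, Nat.factorial (v t + 1)) ≠ 0 :=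
      Finset.prod_ne_zero_iff.mpr fun i _ => Nat.factorial_ne_zero _
    have := padicValNat_le_of_dvd hdvd (Nat.factorial_ne_zero _)
    rwa [padicValNat.mul (by norm_num) hne0, padicValNat.self (by norm_num),
      padicValNat_prod _ _ (fun i _ => Nat.factorial_ne_zero _)] at this
  have hone : ∑ _t : Fin j, 1 = j := by simp
  have hsum1 : ∑ t : Fin j, (v t + 1) = n + j := by
    rw [Finset.sum_add_distrib, hv, hone]
  have h1 : ∑ t, p (v t) = (n + j) + ∑ t, padicValNat 2 (Nat.factorial (v t + 1)) := by
    unfold p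
    rw [Finset.sum_add_distrib]
    congr 1
  rw [h1, p_pred (by omega : 1 ≤ n + j)]
  omega

lemma p_add (a b : ℕ) :
    p a + p b + padicValNat 2 ((a + b + 2).choose (a + 1)) = p (a + b + 1) := by
  have hfac : (a + b + 2).choose (a+1) * Nat.factorial (b+1) * Nat.factorial (a+1)
      = Nat.factorial (a + b + 2) := by
    have := Nat.add_choose_mul_factorial_mul_factorial (b+1) (a+1)
    rwa [show b + 1 + (a + 1) = a + b + 2 by ring] at this
  have hval : padicValNat 2 ((a+b+2).choose (a+1)) + padicValNat 2 (Nat.factorial (b+1))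
      + padicValNat 2 (Nat.factorial (a+1)) = padicValNat 2 (Nat.factorial (a+b+2)) := by
    rw [← hfac, padicValNat.mul
        (Nat.mul_ne_zero (Nat.choose_pos (by omega)).ne' (Nat.factorial_ne_zero _))
        (Nat.factorial_ne_zero _),
      padicValNat.mul (Nat.choose_pos (by omega)).ne' (Nat.factorial_ne_zero _)]
  unfold p
  rw [show a + b + 1 + 1 = a + b + 2 by omega]
  omega

lemma sum_coeff_odd {ℓ : ℕ} (h2 : 2 ≤ ℓ) (he : Even ℓ) :
    Odd (∑ k ∈ Finset.range ℓ, (ℓ - k) * (ℓ + 1).choose (k + 1)) := by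
  have hterm : ∀ k ∈ Finset.range ℓ,
      (ℓ - k) * (ℓ + 1).choose (k + 1) = (ℓ + 1) * ℓ.choose (k + 1) := by
    intro k hk
    rw [Finset.mem_range] at hk
    have e1 : (ℓ+1).choose (k + 2) * (k + 2) = (ℓ+1).choose (k+1) * (ℓ + 1 - (k+1)) :=
      Nat.choose_succ_right_eq (ℓ+1) (k+1)
    have e2 : ℓ.succ * ℓ.choose (k+1) = ℓ.succ.choose (k+2) * (k+2) :=
      Nat.add_one_mul_choose_eq ℓ (k+1)
    have : ℓ + 1 - (k+1) = ℓ - k := by omega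
    rw [this] at e1
    rw [Nat.succ_eq_add_one] at e2
    rw [mul_comm (ℓ - k) _, ← e1, ← e2]
  rw [Finset.sum_congr rfl hterm, ← Finset.mul_sum]
  have hsum : ∑ k ∈ Finset.range ℓ, ℓ.choose (k + 1) = 2 ^ ℓ - 1 := by
    have h1 := Finset.sum_range_succ' (fun k => ℓ.choose k) ℓ
    rw [Nat.sum_range_choose] at h1
    simp only [Nat.choose_zero_right] at h1
    omega
  rw [hsum]
  have hodd1 : Odd (ℓ + 1) := Even.add_one he
  have hodd2 : Odd (2 ^ ℓ - 1) := by
    have : 2 ∣ 2 ^ ℓ := dvd_pow_self 2 (by omega)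
    have h1 : 1 ≤ 2 ^ ℓ := Nat.one_le_two_pow
    exact Nat.Even.sub_odd h1 (even_iff_two_dvd.mpr this) odd_one
  exact hodd1.mul hodd2


section TupleBounds

variable (B : ℕ → ℚ)

lemma ord_prod_B (hB : ∀ i : ℕ, ord (B i) = (-(p i : ℤ) : WithTop ℤ)) {j : ℕ} (v : Fin j → ℕ) :
    ((-(∑ t, (p (v t) : ℤ)) : ℤ) : WithTop ℤ) ≤ ord (∏ t, B (v t)) := by
  have h := ord_prod_ge (s := Finset.univ) (f := fun t => B (v t))
    (c := fun t => -(p (v t) : ℤ)) (fun t _ => le_of_eq (hB (v t)).symm)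
  rwa [Finset.sum_neg_distrib] at h

lemma ord_tuple_sum (hB : ∀ i : ℕ, ord (B i) = (-(p i : ℤ) : WithTop ℤ)) {j n : ℕ} (hj : 1 ≤ j) :
    ((-(p (n + j - 1) : ℤ) : ℤ) : WithTop ℤ) ≤
      ord (∑ v ∈ Finset.Nat.antidiagonalTuple j n, ∏ t, B (v t)) := by
  apply ord_sum
  intro v hv
  have hvs : ∑ t, v t = n := Finset.Nat.mem_antidiagonalTuple.mp hv
  refine le_trans ?_ (ord_prod_B B hB v)
  rw [WithTop.coe_le_coe]
  have h1 : ∑ t, p (v t) ≤ p (n + j - 1) := sum_p_le hj v hvs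
  have h2 : ((∑ t, p (v t) : ℕ) : ℤ) = ∑ t, (p (v t) : ℤ) := by push_cast; ring
  omega

lemma ord_tuple_sum_strict (hB : ∀ i : ℕ, ord (B i) = (-(p i : ℤ) : WithTop ℤ)) {j n : ℕ} (hj : 2 ≤ j) :
    (((1 - (p (n + j - 1) : ℤ)) : ℤ) : WithTop ℤ) ≤
      ord (∑ v ∈ Finset.Nat.antidiagonalTuple j n, ∏ t, B (v t)) := by
  classical
  set i0 : Fin j := ⟨0, by omega⟩ with hi0
  set i1 : Fin j := ⟨1, by omega⟩ with hi1
  have hne01 : i0 ≠ i1 := by simp [hi0, hi1, Fin.ext_iff]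
  set A := Finset.Nat.antidiagonalTuple j n with hA
  set f : (Fin j → ℕ) → ℚ := fun v => ∏ t, B (v t) with hf
  set σ : (Fin j → ℕ) → (Fin j → ℕ) := fun v => v ∘ (Equiv.swap i0 i1) with hσ
  have hσσ : ∀ v, σ (σ v) = v := by
    intro v; funext t; simp [hσ, Equiv.swap_apply_self]
  have hσsum : ∀ v : Fin j → ℕ, ∑ t, (σ v) t = ∑ t, v t := by
    intro v; exact Equiv.sum_comp (Equiv.swap i0 i1) v
  have hσf : ∀ v, f (σ v) = f v := by
    intro v; exact Equiv.prod_comp (Equiv.swap i0 i1) (fun t => B (v t))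
  have hσ01 : ∀ v : Fin j → ℕ, (σ v) i0 = v i1 ∧ (σ v) i1 = v i0 := by
    intro v
    constructor
    · simp [hσ, Equiv.swap_apply_left]
    · simp [hσ, Equiv.swap_apply_right]
  have hsplit1 := Finset.sum_filter_add_sum_filter_not A (fun v => v i0 = v i1) f
  have hsplit2 := Finset.sum_filter_add_sum_filter_not
    (A.filter (fun v => ¬ v i0 = v i1)) (fun v => v i0 < v i1) f
  have hbij : ∑ v ∈ (A.filter (fun v => ¬ v i0 = v i1)).filter (fun v => ¬ v i0 < v i1), f v
      = ∑ v ∈ (A.filter (fun v => ¬ v i0 = v i1)).filter (fun v => v i0 < v i1), f v := by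
    apply Finset.sum_nbij' σ σ
    · intro v hv
      simp only [Finset.mem_filter, hA, Finset.Nat.mem_antidiagonalTuple] at hv ⊢
      obtain ⟨⟨hvA, hne⟩, hlt⟩ := hv
      refine ⟨⟨by rw [hσsum]; exact hvA, ?_⟩, ?_⟩
      · rw [(hσ01 v).1, (hσ01 v).2]; omega
      · rw [(hσ01 v).1, (hσ01 v).2]; omega
    · intro v hv
      simp only [Finset.mem_filter, hA, Finset.Nat.mem_antidiagonalTuple] at hv ⊢
      obtain ⟨⟨hvA, hne⟩, hlt⟩ := hv
      refine ⟨⟨by rw [hσsum]; exact hvA, ?_⟩, ?_⟩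
      · rw [(hσ01 v).1, (hσ01 v).2]; omega
      · rw [(hσ01 v).1, (hσ01 v).2]; omega
    · intro v _; exact hσσ v
    · intro v _; exact hσσ v
    · intro v _; exact (hσf v).symm
  have htwo : ∑ v ∈ A, f v
      = (∑ v ∈ A.filter (fun v => v i0 = v i1), f v)
        + 2 * ∑ v ∈ (A.filter (fun v => ¬ v i0 = v i1)).filter (fun v => v i0 < v i1), f v := by
    rw [← hsplit1, ← hsplit2, hbij]; ring
  rw [htwo]
  apply ord_add_ge
  · apply ord_sum
    intro v hv
    simp only [Finset.mem_filter, hA, Finset.Nat.mem_antidiagonalTuple] at hv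
    obtain ⟨hvs, hdiag⟩ := hv
    refine le_trans ?_ (ord_prod_B B hB v)
    rw [WithTop.coe_le_coe]
    have h1 : (∑ t, p (v t)) + 1 ≤ p (n + j - 1) := sum_p_succ_le hj v hvs hdiag
    have h2 : ((∑ t, p (v t) : ℕ) : ℤ) = ∑ t, (p (v t) : ℤ) := by push_cast; ring
    omega
  · rw [ord_mul]
    have h2 : ord (2 : ℚ) = ((1:ℤ) : WithTop ℤ) := by
      have := ord_two_pow 1
      simpa using this
    rw [h2]
    have hS : ((-(p (n + j - 1) : ℤ) : ℤ) : WithTop ℤ) ≤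
        ord (∑ v ∈ (A.filter (fun v => ¬ v i0 = v i1)).filter (fun v => v i0 < v i1), f v) := by
      apply ord_sum
      intro v hv
      simp only [Finset.mem_filter, hA, Finset.Nat.mem_antidiagonalTuple] at hv
      refine le_trans ?_ (ord_prod_B B hB v)
      rw [WithTop.coe_le_coe]
      have h1 : ∑ t, p (v t) ≤ p (n + j - 1) := sum_p_le (by omega) v hv.1.1
      have h2 : ((∑ t, p (v t) : ℕ) : ℤ) = ∑ t, (p (v t) : ℤ) := by push_cast; ring
      omega
    calc (((1 - (p (n + j - 1) : ℤ)) : ℤ) : WithTop ℤ)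
        = ((1:ℤ) : WithTop ℤ) + ((-(p (n + j - 1) : ℤ) : ℤ) : WithTop ℤ) := by
          rw [sub_eq_add_neg, WithTop.coe_add]
      _ ≤ _ := add_le_add le_rfl hS

lemma M_decomp (m : ℕ) (hm : 1 ≤ m) :
    M B m = (m : ℚ) * B (m - 1)
      + ∑ j ∈ Finset.Icc 2 m, (m.choose j : ℚ) *
          ∑ v ∈ Finset.Nat.antidiagonalTuple j (m - j), ∏ t, B (v t) := by
  unfold M
  have h1 : (1 : ℕ) ∈ Finset.Icc 1 m := by simp [hm]
  rw [← Finset.add_sum_erase _ _ h1, Finset.Icc_erase_left, ← Finset.Icc_add_one_left_eq_Ioc]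
  congr 1
  rw [Finset.Nat.antidiagonalTuple_one, Finset.sum_singleton, Nat.choose_one_right]
  congr 1
  rw [Fin.prod_univ_one]
  simp

lemma ord_M_tail (hB : ∀ i : ℕ, ord (B i) = (-(p i : ℤ) : WithTop ℤ)) (m : ℕ) (hm : 1 ≤ m) :
    (((1 - (p (m - 1) : ℤ)) : ℤ) : WithTop ℤ) ≤
      ord (∑ j ∈ Finset.Icc 2 m, (m.choose j : ℚ) *
        ∑ v ∈ Finset.Nat.antidiagonalTuple j (m - j), ∏ t, B (v t)) := by
  apply ord_sum
  intro j hj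
  rw [Finset.mem_Icc] at hj
  rw [ord_mul]
  have hT := ord_tuple_sum_strict B hB (n := m - j) (j := j) hj.1
  rw [show m - j + j - 1 = m - 1 by omega] at hT
  calc (((1 - (p (m - 1) : ℤ)) : ℤ) : WithTop ℤ)
      = 0 + (((1 - (p (m - 1) : ℤ)) : ℤ) : WithTop ℤ) := by rw [zero_add]
    _ ≤ _ := add_le_add (ord_natCast_nonneg _) hT

lemma P_decomp (ℓ : ℕ) (hℓ : 1 ≤ ℓ) :
    P B ℓ = (ℓ : ℚ) * B ℓ
      + ∑ j ∈ Finset.Icc 2 ℓ, (ℓ.choose j : ℚ) *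
          ∑ v ∈ Finset.Nat.antidiagonalTuple j (ℓ + 1 - j), ∏ t, B (v t) := by
  unfold P
  have h1 : (1 : ℕ) ∈ Finset.Icc 1 ℓ := by simp [hℓ]
  rw [← Finset.add_sum_erase _ _ h1, Finset.Icc_erase_left, ← Finset.Icc_add_one_left_eq_Ioc]
  congr 1
  rw [Finset.Nat.antidiagonalTuple_one, Finset.sum_singleton, Nat.choose_one_right]
  congr 1
  rw [Fin.prod_univ_one]
  simp

lemma ord_P_tail (hB : ∀ i : ℕ, ord (B i) = (-(p i : ℤ) : WithTop ℤ)) (ℓ : ℕ) (hℓ : 1 ≤ ℓ) :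
    (((1 - (p ℓ : ℤ)) : ℤ) : WithTop ℤ) ≤
      ord (∑ j ∈ Finset.Icc 2 ℓ, (ℓ.choose j : ℚ) *
        ∑ v ∈ Finset.Nat.antidiagonalTuple j (ℓ + 1 - j), ∏ t, B (v t)) := by
  apply ord_sum
  intro j hj
  rw [Finset.mem_Icc] at hj
  rw [ord_mul]
  have hT := ord_tuple_sum_strict B hB (n := ℓ + 1 - j) (j := j) hj.1
  rw [show ℓ + 1 - j + j - 1 = ℓ by omega] at hT
  calc (((1 - (p ℓ : ℤ)) : ℤ) : WithTop ℤ)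
      = 0 + (((1 - (p ℓ : ℤ)) : ℤ) : WithTop ℤ) := by rw [zero_add]
    _ ≤ _ := add_le_add (ord_natCast_nonneg _) hT

end TupleBounds


lemma ord_mul_ge {x y : ℚ} {a b c : ℤ} (hx : ((a : ℤ) : WithTop ℤ) ≤ ord x)
    (hy : ((b : ℤ) : WithTop ℤ) ≤ ord y) (h : c ≤ a + b) :
    ((c : ℤ) : WithTop ℤ) ≤ ord (x * y) := by
  rw [ord_mul]
  calc ((c : ℤ) : WithTop ℤ) ≤ ((a + b : ℤ) : WithTop ℤ) := WithTop.coe_le_coe.mpr h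
    _ = ((a : ℤ) : WithTop ℤ) + ((b : ℤ) : WithTop ℤ) := WithTop.coe_add a b
    _ ≤ ord x + ord y := add_le_add hx hy

lemma coe_succ_le_of_lt {a : ℤ} {b : WithTop ℤ} (h : ((a : ℤ) : WithTop ℤ) < b) :
    ((a + 1 : ℤ) : WithTop ℤ) ≤ b := by
  induction b using WithTop.recTopCoe with
  | top => exact le_top
  | coe c =>
    rw [WithTop.coe_lt_coe] at h
    exact WithTop.coe_le_coe.mpr (by omega)

theorem induction_step_even (B C : ℕ → ℚ)
    (hB : ∀ ℓ : ℕ, ord (B ℓ) = (-(p ℓ : ℤ) : WithTop ℤ))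
    (hC0 : C 0 = -B 0)
    (hrec : ∀ ℓ : ℕ, 1 ≤ ℓ →
      C ℓ = -(∑ k ∈ Finset.range ℓ, C k * M B (ℓ - k)) - (M B (ℓ + 1) - P B ℓ))
    (ℓ : ℕ) (hℓ : 1 < ℓ) (heven : Even ℓ)
    (ih_odd : ∀ k : ℕ, 1 ≤ k → k ≤ ℓ - 1 → Odd k → ord (C k) = (-(p k : ℤ) : WithTop ℤ))
    (ih_even : ∀ k : ℕ, 2 ≤ k → k ≤ ℓ - 1 → Even k →
      (-(p k : ℤ) : WithTop ℤ) < ord (C k)) :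
    (-(p ℓ : ℤ) : WithTop ℤ) < ord (C ℓ) := by
  have hcoe : ∀ a : ℤ, -((a : ℤ) : WithTop ℤ) = ((-a : ℤ) : WithTop ℤ) := fun a => rfl
  simp only [hcoe] at hB ih_odd ih_even ⊢
  have hℓ1 : 1 ≤ ℓ := by omega
  have hℓ2 : 2 ∣ ℓ := heven.two_dvd
  set Qm : ℕ → ℚ := fun m => ∑ j ∈ Finset.Icc 2 m, (m.choose j : ℚ) *
      ∑ v ∈ Finset.Nat.antidiagonalTuple j (m - j), ∏ t, B (v t) with hQm
  set QP : ℚ := ∑ j ∈ Finset.Icc 2 ℓ, (ℓ.choose j : ℚ) *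
      ∑ v ∈ Finset.Nat.antidiagonalTuple j (ℓ + 1 - j), ∏ t, B (v t) with hQPdef
  have hMd : ∀ m : ℕ, 1 ≤ m → M B m = (m : ℚ) * B (m - 1) + Qm m :=
    fun m hm => M_decomp B m hm
  have hQmb : ∀ m : ℕ, 1 ≤ m →
      (((1 - (p (m - 1) : ℤ)) : ℤ) : WithTop ℤ) ≤ ord (Qm m) :=
    fun m hm => ord_M_tail B hB m hm
  have hPd : P B ℓ = (ℓ : ℚ) * B ℓ + QP := P_decomp B ℓ hℓ1
  have hQPb : (((1 - (p ℓ : ℤ)) : ℤ) : WithTop ℤ) ≤ ord QP := ord_P_tail B hB ℓ hℓ1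
  -- general lower bound on ord (C k)
  have hCk : ∀ k, k < ℓ → ((-(p k : ℤ) : ℤ) : WithTop ℤ) ≤ ord (C k) := by
    intro k hk
    rcases eq_or_ne k 0 with rfl | hk0
    · rw [hC0, ord_neg, hB 0]
    rcases Nat.even_or_odd k with he | ho
    · exact le_of_lt (ih_even k (by have := he.two_dvd; omega) (by omega) he)
    · exact le_of_eq (ih_odd k (by have := Nat.odd_iff.mp ho; omega) (by omega) ho).symm
  -- the per-k key p identity
  have hpadd : ∀ k, k < ℓ →
      p k + p (ℓ - k - 1) + padicValNat 2 ((ℓ + 1).choose (k + 1)) = p ℓ := by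
    intro k hk
    have := p_add k (ℓ - k - 1)
    rw [show k + (ℓ - k - 1) + 1 = ℓ by omega, show k + (ℓ - k - 1) + 2 = ℓ + 1 by omega]
      at this
    exact this
  -- main decomposition
  have hM1 : M B (ℓ + 1) = ((ℓ + 1 : ℕ) : ℚ) * B ℓ + Qm (ℓ + 1) := by
    have := hMd (ℓ + 1) (by omega)
    rwa [Nat.add_sub_cancel] at this
  have e1' : ∑ k ∈ Finset.range ℓ, C k * M B (ℓ - k) =
      (∑ k ∈ Finset.range ℓ, C k * (((ℓ - k : ℕ) : ℚ) * B (ℓ - k - 1)))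
        + ∑ k ∈ Finset.range ℓ, C k * Qm (ℓ - k) := by
    rw [← Finset.sum_add_distrib]
    refine Finset.sum_congr rfl fun k hk => ?_
    rw [Finset.mem_range] at hk
    rw [hMd (ℓ - k) (by omega)]
    ring
  have hC2 : C ℓ = -((∑ k ∈ Finset.range ℓ, C k * (((ℓ - k : ℕ) : ℚ) * B (ℓ - k - 1)))
        + ∑ k ∈ Finset.range ℓ, C k * Qm (ℓ - k))
      - ((((ℓ + 1 : ℕ) : ℚ) * B ℓ + Qm (ℓ + 1)) - ((ℓ : ℚ) * B ℓ + QP)) := by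
    rw [hrec ℓ hℓ1, e1', hM1, hPd]
  have hmain : (2 : ℚ) ^ (p ℓ) * C ℓ =
      (∑ k ∈ Finset.range ℓ,
        (-((2 : ℚ) ^ (p ℓ) * (C k * (((ℓ - k : ℕ) : ℚ) * B (ℓ - k - 1))))
          - (((ℓ - k) * (ℓ + 1).choose (k + 1) : ℕ) : ℚ)))
      + ((-((2 : ℚ) ^ (p ℓ) * B ℓ) + 1)
        + ((((∑ k ∈ Finset.range ℓ, (ℓ - k) * (ℓ + 1).choose (k + 1) : ℕ) : ℚ) - 1)
          + (2 : ℚ) ^ (p ℓ) * (-(∑ k ∈ Finset.range ℓ, C k * Qm (ℓ - k))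
              - Qm (ℓ + 1) + QP))) := by
    rw [hC2, Finset.sum_sub_distrib]
    have eA : ∑ k ∈ Finset.range ℓ,
        -((2 : ℚ) ^ (p ℓ) * (C k * (((ℓ - k : ℕ) : ℚ) * B (ℓ - k - 1))))
        = -((2 : ℚ) ^ (p ℓ) * ∑ k ∈ Finset.range ℓ,
            C k * (((ℓ - k : ℕ) : ℚ) * B (ℓ - k - 1))) := by
      rw [Finset.mul_sum, Finset.sum_neg_distrib]
    rw [eA, Nat.cast_sum]
    push_cast
    ring
  -- the odd counting sum
  have hSodd : Odd (∑ k ∈ Finset.range ℓ, (ℓ - k) * (ℓ + 1).choose (k + 1)) :=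
    sum_coeff_odd (by omega) heven
  -- the main bound
  have hord : ((1 : ℤ) : WithTop ℤ) ≤ ord ((2 : ℚ) ^ (p ℓ) * C ℓ) := by
    rw [hmain]
    apply ord_add_ge
    · -- terms k
      apply ord_sum
      intro k hk
      rw [Finset.mem_range] at hk
      have hpk := hpadd k hk
      rw [sub_eq_add_neg]
      by_cases hodd : Odd ((ℓ - k) * (ℓ + 1).choose (k + 1))
      · obtain ⟨h1, h2⟩ := Nat.odd_mul.mp hodd
        have hkodd : Odd k := by
          have h1' := Nat.odd_iff.mp h1
          have hev := Nat.even_iff.mp heven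
          rw [Nat.odd_iff]; omega
        have he0 : padicValNat 2 ((ℓ + 1).choose (k + 1)) = 0 :=
          padicValNat.eq_zero_of_not_dvd (by have := Nat.odd_iff.mp h2; omega)
        have hyk : ord (-((2 : ℚ) ^ (p ℓ) * (C k * (((ℓ - k : ℕ) : ℚ) * B (ℓ - k - 1)))))
            = ((0 : ℤ) : WithTop ℤ) := by
          rw [ord_neg, ord_mul, ord_mul, ord_mul, ord_two_pow,
            ih_odd k (by have := Nat.odd_iff.mp hkodd; omega) (by omega) hkodd,
            ord_odd h1, hB (ℓ - k - 1)]
          rw [← WithTop.coe_add, ← WithTop.coe_add, ← WithTop.coe_add, WithTop.coe_eq_coe]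
          omega
        exact ord_unit_add hyk (by rw [ord_neg]; exact ord_odd hodd)
      · have hevenc : Even ((ℓ - k) * (ℓ + 1).choose (k + 1)) := Nat.not_odd_iff_even.mp hodd
        apply ord_add_ge
        · rw [ord_neg]
          by_cases hch : 2 ∣ (ℓ + 1).choose (k + 1)
          · have he1 : 1 ≤ padicValNat 2 ((ℓ + 1).choose (k + 1)) :=
              val_of_two_dvd (Nat.choose_pos (by omega)).ne' hch
            apply ord_mul_ge (a := (p ℓ : ℤ)) (b := 1 - (p ℓ : ℤ))
                (le_of_eq (ord_two_pow _).symm) ?_ (by omega)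
            apply ord_mul_ge (a := -(p k : ℤ)) (b := -(p (ℓ - k - 1) : ℤ))
                (hCk k hk) ?_ (by push_cast; omega)
            apply ord_mul_ge (a := 0) (b := -(p (ℓ - k - 1) : ℤ))
                ?_ (le_of_eq (hB (ℓ - k - 1)).symm) (by omega)
            exact le_trans (le_of_eq (by norm_num)) (ord_natCast_nonneg (ℓ - k))
          · have hlk : 2 ∣ (ℓ - k) := by
              rcases (Nat.even_mul.mp hevenc) with hl | hr
              · exact hl.two_dvd
              · exact absurd hr.two_dvd hch
            rcases eq_or_ne k 0 with rfl | hk0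
            · apply ord_mul_ge (a := (p ℓ : ℤ)) (b := 1 - (p ℓ : ℤ))
                  (le_of_eq (ord_two_pow _).symm) ?_ (by omega)
              apply ord_mul_ge (a := -(p 0 : ℤ)) (b := 1 - (p (ℓ - 0 - 1) : ℤ))
                  (by rw [hC0, ord_neg, hB 0]) ?_ (by push_cast; omega)
              apply ord_mul_ge (a := 1) (b := -(p (ℓ - 0 - 1) : ℤ))
                  ?_ (le_of_eq (hB (ℓ - 0 - 1)).symm) (by omega)
              exact ord_even (by omega)
            · have hkeven : Even k := by
                rw [Nat.even_iff]
                have hev := Nat.even_iff.mp heven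
                omega
              have hC' : ((-(p k : ℤ) + 1 : ℤ) : WithTop ℤ) ≤ ord (C k) :=
                coe_succ_le_of_lt (ih_even k (by have := hkeven.two_dvd; omega)
                  (by omega) hkeven)
              apply ord_mul_ge (a := (p ℓ : ℤ)) (b := 1 - (p ℓ : ℤ))
                  (le_of_eq (ord_two_pow _).symm) ?_ (by omega)
              apply ord_mul_ge (a := -(p k : ℤ) + 1) (b := -(p (ℓ - k - 1) : ℤ))
                  hC' ?_ (by push_cast; omega)
              apply ord_mul_ge (a := 0) (b := -(p (ℓ - k - 1) : ℤ))
                  ?_ (le_of_eq (hB (ℓ - k - 1)).symm) (by omega)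
              exact le_trans (le_of_eq (by norm_num)) (ord_natCast_nonneg (ℓ - k))
        · rw [ord_neg]
          exact ord_even hevenc.two_dvd
    · apply ord_add_ge
      · -- -(2^p * B ℓ) + 1
        apply ord_unit_add ?_ ord_one
        rw [ord_neg, ord_mul, ord_two_pow, hB ℓ, ← WithTop.coe_add, WithTop.coe_eq_coe]
        omega
      · apply ord_add_ge
        · -- cast S - 1
          have h1S : 1 ≤ ∑ k ∈ Finset.range ℓ, (ℓ - k) * (ℓ + 1).choose (k + 1) := by
            have := Nat.odd_iff.mp hSodd; omega
          rw [show (((∑ k ∈ Finset.range ℓ, (ℓ - k) * (ℓ + 1).choose (k + 1) : ℕ) : ℚ) - 1)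
              = (((∑ k ∈ Finset.range ℓ, (ℓ - k) * (ℓ + 1).choose (k + 1)) - 1 : ℕ) : ℚ) by
            push_cast [h1S]; ring]
          exact ord_even (by have := Nat.odd_iff.mp hSodd; omega)
        · -- 2^p * R
          apply ord_mul_ge (a := (p ℓ : ℤ)) (b := 1 - (p ℓ : ℤ))
              (le_of_eq (ord_two_pow _).symm) ?_ (by omega)
          rw [sub_eq_add_neg (-(∑ k ∈ Finset.range ℓ, C k * Qm (ℓ - k))) (Qm (ℓ + 1))]
          apply ord_add_ge
          apply ord_add_ge
          · rw [ord_neg]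
            apply ord_sum
            intro k hk
            rw [Finset.mem_range] at hk
            have hpk := hpadd k hk
            apply ord_mul_ge (a := -(p k : ℤ)) (b := 1 - (p (ℓ - k - 1) : ℤ))
                (hCk k hk) (hQmb (ℓ - k) (by omega)) (by push_cast; omega)
          · rw [ord_neg]
            have := hQmb (ℓ + 1) (by omega)
            rwa [Nat.add_sub_cancel] at this
          · exact hQPb
  -- conclude
  rcases eq_or_ne (C ℓ) 0 with h0 | h0
  · rw [h0, ord_zero]
    exact WithTop.coe_lt_top _
  · rw [ord_mul, ord_two_pow, ord_eq_of_ne h0] at hord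
    rw [ord_eq_of_ne h0]
    rw [← WithTop.coe_add, WithTop.coe_le_coe] at hord
    rw [WithTop.coe_lt_coe]
    omega
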